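/- Let q ∈ L¹([0, π]; ℝ) be real-valued and α, β ∈ ℝ, and consider the Dirac system with p ≡ 0, i.e. B y′ + σ₃ q(x) y = λ y. Then a real number λ belongs to Spec(0, q, α, β) if and only if −λ belongs to Spec(0, q, −α, −β); that is, Spec(0, q, −α, −β) = −Spec(0, q, α, β). Moreover, for every eigenvalue λ ∈ Spec(0, q, α, β), the corresponding norming constants agree: ∫₀^π |φ(x, λ, α)|² dx = ∫₀^π |φ(x, −λ, −α)|² dx, where both solutions are taken with the same potential (0, q). -/

import Mathlib

open MeasureTheory Filter Set

noncomputable section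

/-- The matrix `B` with rows `(0, 1)` and `(-1, 0)`. -/
def BmatR : Matrix (Fin 2) (Fin 2) ℝ := !![0, 1; -1, 0]

/-- The potential matrix `Ω(x)` with rows `(p x, q x)` and `(q x, -p x)`. -/
def OmegaR (p q : ℝ → ℝ) (x : ℝ) : Matrix (Fin 2) (Fin 2) ℝ := !![p x, q x; q x, -p x]

/-- `y` is an absolutely continuous solution of `B y' + Ω y = λ y` on `[0, π]`
(the equation holding almost everywhere). -/
def IsSol (p q : ℝ → ℝ) (lam : ℝ) (y : ℝ → Fin 2 → ℝ) : Prop :=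
  ∃ y' : ℝ → Fin 2 → ℝ,
    IntegrableOn y' (Icc 0 Real.pi) ∧
    (∀ x ∈ Icc (0:ℝ) Real.pi, y x = y 0 + ∫ s in (0:ℝ)..x, y' s) ∧
    ∀ᵐ x ∂(volume.restrict (Ioc 0 Real.pi)),
      BmatR.mulVec (y' x) + (OmegaR p q x).mulVec (y x) = lam • y x

/-- `lam` is an eigenvalue of the boundary value problem `L(p, q, α, β)`. -/
def IsEigen (p q : ℝ → ℝ) (α β lam : ℝ) : Prop :=
  ∃ y : ℝ → Fin 2 → ℝ, IsSol p q lam y ∧ (∃ x ∈ Icc (0:ℝ) Real.pi, y x ≠ 0) ∧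
    y 0 0 * Real.cos α + y 0 1 * Real.sin α = 0 ∧
    y Real.pi 0 * Real.cos β + y Real.pi 1 * Real.sin β = 0

/-- The spectrum of the boundary value problem `L(p, q, α, β)`. -/
def Spec (p q : ℝ → ℝ) (α β : ℝ) : Set ℝ := {lam | IsEigen p q α β lam}

/-- `y` is the solution `φ(·, λ, γ)` of the Cauchy problem with initial data
`(sin γ, -cos γ)`. -/
def IsSolInit (p q : ℝ → ℝ) (lam γ : ℝ) (y : ℝ → Fin 2 → ℝ) : Prop :=
  IsSol p q lam y ∧ y 0 = ![Real.sin γ, -Real.cos γ]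

/-!
For `p ≡ 0` the map `(y₁, y₂) ↦ (-y₁, y₂)` sends solutions for `λ` to solutions for `-λ` (for
general `p` it also replaces `p` by `-p`) and the boundary condition with angle `α` to the one with
angle `-α`; this gives the symmetry of the spectrum. It also sends `φ(·, λ, α)` to a solution with
the initial value of `φ(·, -λ, -α)`, so the two coincide and have the same norming constant.
Uniqueness for the Cauchy problem comes from the Wronskian `y₁ z₂ - y₂ z₁` of two solutions: it
is absolutely continuous with derivative zero almost everywhere, hence constant.
-/

open scoped Matrix

theorem AbsolutelyContinuousOnInterval.congr {X : Type*} [PseudoMetricSpace X] {f g : ℝ → X}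
    {a b : ℝ} (hf : AbsolutelyContinuousOnInterval f a b) (hfg : EqOn f g (uIcc a b)) :
    AbsolutelyContinuousOnInterval g a b := by
  refine Tendsto.congr' ?_ hf
  filter_upwards [mem_inf_of_right (mem_principal_self _)] with E hE
  refine Finset.sum_congr rfl fun i hi => ?_
  rw [hfg (hE.1 i hi).1, hfg (hE.1 i hi).2]

section Primitive

variable {a b : ℝ}

theorem absolutelyContinuousOnInterval_of_eq_add_integral {f f' : ℝ → ℝ} (hab : a ≤ b)
    (hf' : IntervalIntegrable f' volume a b)
    (hf : ∀ x ∈ Icc a b, f x = f a + ∫ s in a..x, f' s) :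
    AbsolutelyContinuousOnInterval f a b := by
  have hconst : AbsolutelyContinuousOnInterval (fun _ => f a) a b :=
    (LipschitzWith.const (f a)).lipschitzOnWith.absolutelyContinuousOnInterval
  refine (hconst.fun_add
    (hf'.absolutelyContinuousOnInterval_intervalIntegral left_mem_uIcc)).congr
      fun x hx => (hf x ?_).symm
  rwa [uIcc_of_le hab] at hx

theorem ae_hasDerivAt_of_eq_add_integral {E : Type*} [NormedAddCommGroup E] [NormedSpace ℝ E]
    [CompleteSpace E] {f f' : ℝ → E} (hf' : IntervalIntegrable f' volume a b)
    (hf : ∀ x ∈ Icc a b, f x = f a + ∫ s in a..x, f' s) :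
    ∀ᵐ x, x ∈ Icc a b → HasDerivAt f (f' x) x := by
  have hne_a : ∀ᵐ x, x ≠ a := by simp [ae_iff, measure_singleton]
  have hne_b : ∀ᵐ x, x ≠ b := by simp [ae_iff, measure_singleton]
  filter_upwards [hf'.ae_hasDerivAt_integral, hne_a, hne_b] with x hderiv hxa hxb hx
  have hab : a ≤ b := hx.1.trans hx.2
  have hx_uIcc : x ∈ uIcc a b := by rwa [uIcc_of_le hab]
  refine ((hderiv hx_uIcc a left_mem_uIcc).const_add (f a)).congr_of_eventuallyEq ?_
  filter_upwards [Icc_mem_nhds (lt_of_le_of_ne hx.1 hxa.symm) (lt_of_le_of_ne hx.2 hxb)]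
    with y hy using hf y hy

theorem MeasureTheory.IntegrableOn.intervalIntegrable_of_mem_Icc {E : Type*}
    [NormedAddCommGroup E] {f : ℝ → E} {x : ℝ} (hf : IntegrableOn f (Icc a b))
    (hx : x ∈ Icc a b) : IntervalIntegrable f volume a x :=
  (hf.mono_set (by rw [uIcc_of_le hx.1]; exact Icc_subset_Icc le_rfl hx.2)).intervalIntegrable

end Primitive

def wronskian (u v : Fin 2 → ℝ) : ℝ := u 0 * v 1 - u 1 * v 0

theorem eq_of_wronskian_eq {u v w w' : Fin 2 → ℝ} (huv : wronskian u v ≠ 0)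
    (hu : wronskian w u = wronskian w' u) (hv : wronskian w v = wronskian w' v) : w = w' := by
  unfold wronskian at *
  have h0 : (w 0 - w' 0) * (u 0 * v 1 - u 1 * v 0) = 0 := by
    linear_combination u 0 * hv - v 0 * hu
  have h1 : (w 1 - w' 1) * (u 0 * v 1 - u 1 * v 0) = 0 := by
    linear_combination u 1 * hv - v 1 * hu
  ext i
  fin_cases i
  · simpa [sub_eq_zero] using (mul_eq_zero.1 h0).resolve_right huv
  · simpa [sub_eq_zero] using (mul_eq_zero.1 h1).resolve_right huv

theorem BmatR_mulVec_add_OmegaR_mulVec_eq_smul_iff {p q : ℝ → ℝ} {x lam : ℝ}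
    {v w : Fin 2 → ℝ} :
    BmatR *ᵥ v + OmegaR p q x *ᵥ w = lam • w ↔
      v = ![q x * w 0 - (lam + p x) * w 1, (lam - p x) * w 0 - q x * w 1] := by
  simp only [BmatR, OmegaR, Matrix.cons_mulVec, Matrix.empty_mulVec, dotProduct,
    Fin.sum_univ_two, Matrix.cons_val_zero, Matrix.cons_val_one, Matrix.cons_val_fin_one,
    Matrix.add_cons, Matrix.head_cons, Matrix.tail_cons, Matrix.empty_add_empty, zero_mul,
    one_mul, zero_add, neg_mul, add_zero, funext_iff, Fin.forall_fin_two, Pi.smul_apply,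
    smul_eq_mul]
  constructor <;> rintro ⟨h0, h1⟩ <;> constructor <;> linarith

def negFst : (Fin 2 → ℝ) →L[ℝ] Fin 2 → ℝ :=
  ContinuousLinearMap.pi ![-ContinuousLinearMap.proj 0, ContinuousLinearMap.proj 1]

@[simp]
theorem negFst_apply (v : Fin 2 → ℝ) : negFst v = ![-v 0, v 1] := by
  ext i
  fin_cases i <;> rfl

namespace IsSol

variable {p q : ℝ → ℝ} {lam : ℝ} {y z : ℝ → Fin 2 → ℝ}

theorem absolutelyContinuousOnInterval_apply (hy : IsSol p q lam y) (i : Fin 2) :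
    AbsolutelyContinuousOnInterval (fun x => y x i) 0 Real.pi := by
  obtain ⟨y', hy', hrep, -⟩ := hy
  refine absolutelyContinuousOnInterval_of_eq_add_integral Real.pi_pos.le
    (IntegrableOn.intervalIntegrable_of_mem_Icc (Integrable.eval hy' i)
      (right_mem_Icc.2 Real.pi_pos.le))
    fun x hx => ?_
  rw [hrep x hx, Pi.add_apply]
  exact congrArg _ ((ContinuousLinearMap.proj (R := ℝ) i).intervalIntegral_comp_comm
    (hy'.intervalIntegrable_of_mem_Icc hx)).symm

theorem exists_ae_hasDerivAt (hy : IsSol p q lam y) :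
    ∃ y' : ℝ → Fin 2 → ℝ, ∀ᵐ x, x ∈ Icc 0 Real.pi →
      HasDerivAt y (y' x) x ∧ BmatR *ᵥ y' x + OmegaR p q x *ᵥ y x = lam • y x := by
  obtain ⟨y', hy', hrep, heq⟩ := hy
  refine ⟨y', ?_⟩
  have hne : ∀ᵐ x, x ≠ (0 : ℝ) := by simp [ae_iff, measure_singleton]
  filter_upwards [ae_hasDerivAt_of_eq_add_integral
    (hy'.intervalIntegrable_of_mem_Icc (right_mem_Icc.2 Real.pi_pos.le)) hrep,
    (ae_restrict_iff' measurableSet_Ioc).1 heq, hne] with x hderiv hx_eq hx0 hx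
  exact ⟨hderiv hx, hx_eq ⟨lt_of_le_of_ne hx.1 hx0.symm, hx.2⟩⟩

theorem wronskian_eq (hy : IsSol p q lam y) (hz : IsSol p q lam z) :
    ∀ x ∈ Icc 0 Real.pi, wronskian (y x) (z x) = wronskian (y 0) (z 0) := by
  have hW : AbsolutelyContinuousOnInterval (fun x => wronskian (y x) (z x)) 0 Real.pi :=
    ((hy.absolutelyContinuousOnInterval_apply 0).fun_mul
      (hz.absolutelyContinuousOnInterval_apply 1)).fun_sub
      ((hy.absolutelyContinuousOnInterval_apply 1).fun_mul
        (hz.absolutelyContinuousOnInterval_apply 0))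
  obtain ⟨y', hy'⟩ := hy.exists_ae_hasDerivAt
  obtain ⟨z', hz'⟩ := hz.exists_ae_hasDerivAt
  have hW' : ∀ᵐ x, x ∈ uIcc 0 Real.pi →
      HasDerivAt (fun x => wronskian (y x) (z x)) 0 x := by
    filter_upwards [hy', hz'] with x hyx hzx hx
    rw [uIcc_of_le Real.pi_pos.le] at hx
    obtain ⟨hdy, hey⟩ := hyx hx
    obtain ⟨hdz, hez⟩ := hzx hx
    rw [BmatR_mulVec_add_OmegaR_mulVec_eq_smul_iff] at hey hez
    refine (((hasDerivAt_pi.1 hdy 0).mul (hasDerivAt_pi.1 hdz 1)).sub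
      ((hasDerivAt_pi.1 hdy 1).mul (hasDerivAt_pi.1 hdz 0))).congr_deriv ?_
    rw [hey, hez]
    simp only [Matrix.cons_val_zero, Matrix.cons_val_one]
    ring
  obtain ⟨C, hC⟩ := hW.const_of_ae_hasDerivAt_zero hW'
  intro x hx
  rw [hC x (by rwa [uIcc_of_le Real.pi_pos.le]), hC 0 left_mem_uIcc]

theorem eqOn_of_apply_zero_eq {u v : ℝ → Fin 2 → ℝ} (hy : IsSol p q lam y)
    (hz : IsSol p q lam z) (h0 : y 0 = z 0) (hu : IsSol p q lam u) (hv : IsSol p q lam v)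
    (huv : wronskian (u 0) (v 0) ≠ 0) : EqOn y z (Icc 0 Real.pi) := fun x hx =>
  eq_of_wronskian_eq (u := u x) (v := v x) (by rwa [hu.wronskian_eq hv x hx])
    (by rw [hy.wronskian_eq hu x hx, hz.wronskian_eq hu x hx, h0])
    (by rw [hy.wronskian_eq hv x hx, hz.wronskian_eq hv x hx, h0])

theorem clm_comp {p' q' : ℝ → ℝ} {lam' : ℝ} (L : (Fin 2 → ℝ) →L[ℝ] Fin 2 → ℝ)
    (hy : IsSol p q lam y)
    (hL : ∀ x v w, BmatR *ᵥ v + OmegaR p q x *ᵥ w = lam • w →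
      BmatR *ᵥ L v + OmegaR p' q' x *ᵥ L w = lam' • L w) :
    IsSol p' q' lam' (fun x => L (y x)) := by
  obtain ⟨y', hy', hrep, heq⟩ := hy
  refine ⟨fun x => L (y' x), L.integrable_comp hy', fun x hx => ?_,
    heq.mono fun x hx => hL x _ _ hx⟩
  show L (y x) = L (y 0) + ∫ s in 0..x, L (y' s)
  rw [hrep x hx, map_add, L.intervalIntegral_comp_comm (hy'.intervalIntegrable_of_mem_Icc hx)]

theorem reflect (hy : IsSol p q lam y) :
    IsSol (fun x => -p x) q (-lam) (fun x => negFst (y x)) := by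
  refine hy.clm_comp _ fun x v w h => ?_
  rw [BmatR_mulVec_add_OmegaR_mulVec_eq_smul_iff] at h ⊢
  rw [h]
  ext i
  fin_cases i <;>
    simp only [Fin.zero_eta, Fin.mk_one, negFst_apply, Matrix.cons_val_zero,
      Matrix.cons_val_one, Matrix.cons_val_fin_one] <;> ring

end IsSol

theorem IsEigen.reflect {p q : ℝ → ℝ} {α β lam : ℝ} (h : IsEigen p q α β lam) :
    IsEigen (fun x => -p x) q (-α) (-β) (-lam) := by
  obtain ⟨y, hy, ⟨x, hx, hyx⟩, h0, hπ⟩ := h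
  refine ⟨fun x => negFst (y x), hy.reflect, ⟨x, hx, ?_⟩, ?_, ?_⟩
  · simpa [funext_iff, Fin.forall_fin_two] using hyx
  · simp only [negFst_apply, Matrix.cons_val_zero, Matrix.cons_val_one, Real.cos_neg,
      Real.sin_neg]
    linear_combination -h0
  · simp only [negFst_apply, Matrix.cons_val_zero, Matrix.cons_val_one, Real.cos_neg,
      Real.sin_neg]
    linear_combination -hπ

theorem stmt_18_general (q : ℝ → ℝ) (α β : ℝ)
    (φ : ℝ → ℝ → ℝ → Fin 2 → ℝ)
    (hφ : ∀ γ l : ℝ, IsSolInit (fun _ => 0) q l γ (φ γ l)) :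
    (∀ lam : ℝ, lam ∈ Spec (fun _ => 0) q α β ↔
      -lam ∈ Spec (fun _ => 0) q (-α) (-β)) ∧
    Spec (fun _ => 0) q (-α) (-β) = (fun l : ℝ => -l) '' Spec (fun _ => 0) q α β ∧
    (∀ lam ∈ Spec (fun _ => 0) q α β,
      (∫ x in (0:ℝ)..Real.pi, ((φ α lam x 0) ^ 2 + (φ α lam x 1) ^ 2)) =
        ∫ x in (0:ℝ)..Real.pi, ((φ (-α) (-lam) x 0) ^ 2 + (φ (-α) (-lam) x 1) ^ 2)) := by
  have hneg : ∀ {α β lam : ℝ}, lam ∈ Spec (fun _ => 0) q α β →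
      -lam ∈ Spec (fun _ => 0) q (-α) (-β) := fun h => by
    have h' := h.reflect
    simp only [neg_zero] at h'
    exact h'
  have hiff : ∀ lam : ℝ, lam ∈ Spec (fun _ => 0) q α β ↔
      -lam ∈ Spec (fun _ => 0) q (-α) (-β) :=
    fun lam => ⟨hneg, fun h => by simpa only [neg_neg] using hneg h⟩
  refine ⟨hiff, ?_, fun lam _ => ?_⟩
  · ext l
    rw [image_neg_eq_neg, Set.mem_neg, hiff, neg_neg]
  have hreflect : EqOn (φ (-α) (-lam)) (fun x => negFst (φ α lam x)) (Icc 0 Real.pi) := by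
    have hsol : IsSol (fun _ => 0) q (-lam) (fun x => negFst (φ α lam x)) := by
      simpa only [neg_zero] using (hφ α lam).1.reflect
    -- `φ(·, -λ, 0)` and `φ(·, -λ, π/2)` start at `(0, -1)` and `(1, 0)`
    refine (hφ (-α) (-lam)).1.eqOn_of_apply_zero_eq hsol ?_ (hφ 0 (-lam)).1
      (hφ (Real.pi / 2) (-lam)).1 ?_
    · simp [(hφ _ _).2]
    · simp [wronskian, (hφ _ _).2]
  refine intervalIntegral.integral_congr fun x hx => ?_
  rw [uIcc_of_le Real.pi_pos.le] at hx
  simp [hreflect hx]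

/-- Symmetry of the spectrum for `p ≡ 0`:
`λ ∈ Spec(0,q,α,β) ↔ -λ ∈ Spec(0,q,-α,-β)`, i.e.
`Spec(0,q,-α,-β) = -Spec(0,q,α,β)`, and the corresponding norming constants agree:
`∫₀^π |φ(x,λ,α)|² = ∫₀^π |φ(x,-λ,-α)|²`. -/
theorem stmt_18 (q : ℝ → ℝ) (hq : IntegrableOn q (Icc 0 Real.pi)) (α β : ℝ)
    (φ : ℝ → ℝ → ℝ → Fin 2 → ℝ)
    (hφ : ∀ γ l : ℝ, IsSolInit (fun _ => 0) q l γ (φ γ l)) :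
    (∀ lam : ℝ, lam ∈ Spec (fun _ => 0) q α β ↔
      -lam ∈ Spec (fun _ => 0) q (-α) (-β)) ∧
    Spec (fun _ => 0) q (-α) (-β) = (fun l : ℝ => -l) '' Spec (fun _ => 0) q α β ∧
    (∀ lam ∈ Spec (fun _ => 0) q α β,
      (∫ x in (0:ℝ)..Real.pi, ((φ α lam x 0) ^ 2 + (φ α lam x 1) ^ 2)) =
        ∫ x in (0:ℝ)..Real.pi, ((φ (-α) (-lam) x 0) ^ 2 + (φ (-α) (-lam) x 1) ^ 2)) :=
  stmt_18_general q α β φ hφ
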